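/- arXiv:1906.05751 — 2 statements merged into one kernel-verified Lean document; each statement's English description precedes it below -/
import Mathlib

section
/- For all integers m, m' with 0 ≤ m, m' ≤ |n|−1 and all Schwartz functions g, h : ℝ → ℂ, one has ∫_{[0,1]²} Θ_m(g)(x¹,x²) · conj(Θ_{m'}(h)(x¹,x²)) dx¹ dx² = δ_{m,m'} · ∫_ℝ g(t) · conj(h(t)) dt. In particular each Θ_m preserves the L² inner product (norm over [0,1]² on the target, over ℝ on the source) and is injective on Schwartz functions, and Θ_m(g), Θ_{m'}(h) are orthogonal in L²([0,1]²) when m ≠ m'. -/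
/-!
For fixed `x²`, `x¹ ↦ Θ_m(g)(x¹, x²)` is an absolutely convergent Fourier series with frequencies
`nk + m`, `k ∈ ℤ`. For `0 ≤ m, m' < |n|` the frequencies `nk + m` and `nk' + m'` agree only when
`k = k'` and `m = m'`, so orthogonality of the characters `e^{2πiqx}` on `[0, 1]` gives
`∫₀¹ Θ_m(g) · conj Θ_{m'}(h) dx¹ = δ_{m,m'} Σ_k g(x² + k) · conj h(x² + k)`.
Integrating this periodization of `g · conj h` over `x² ∈ [0, 1]` unfolds it to `∫_ℝ g · conj h`.
Injectivity follows because `Θ_m` then preserves the `L²` inner product of Schwartz functions.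
-/

open Real Complex MeasureTheory

/-- `Θ_m(g)(x¹,x²) = Σ_{k∈ℤ} e^{2πi(nk+m)x¹} g(x²+k)`. -/
noncomputable def Theta (n m : ℤ) (g : SchwartzMap ℝ ℂ) (x1 x2 : ℝ) : ℂ :=
  ∑' k : ℤ, Complex.exp (2 * Real.pi * Complex.I * ((n : ℂ) * (k : ℂ) + (m : ℂ)) * (x1 : ℂ))
    * g (x2 + (k : ℝ))

open scoped ComplexConjugate

noncomputable def circleExp (q : ℤ) (x : ℝ) : ℂ := exp (2 * π * I * q * x)

theorem norm_circleExp (q : ℤ) (x : ℝ) : ‖circleExp q x‖ = 1 := by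
  rw [circleExp, show 2 * π * I * q * x = ((2 * π * q * x : ℝ) : ℂ) * I by push_cast; ring]
  exact norm_exp_ofReal_mul_I _

theorem continuous_circleExp (q : ℤ) : Continuous (circleExp q) := by
  unfold circleExp
  fun_prop

theorem circleExp_mul_conj (q q' : ℤ) (x : ℝ) :
    circleExp q x * conj (circleExp q' x) = circleExp (q - q') x := by
  simp only [circleExp, ← exp_conj, ← Complex.exp_add, map_mul, map_ofNat, conj_ofReal, conj_I,
    map_intCast]
  push_cast
  ring_nf

theorem integral_circleExp (q : ℤ) :
    ∫ x in (0 : ℝ)..1, circleExp q x = if q = 0 then 1 else 0 := by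
  split_ifs with hq
  · simp [circleExp, hq]
  · have hc : 2 * π * I * q ≠ 0 := by simp [pi_ne_zero, I_ne_zero, hq]
    have hperiod : exp (2 * π * I * q) = 1 := by
      rw [show 2 * π * I * q = q * (2 * π * I) by ring]
      exact exp_int_mul_two_pi_mul_I q
    simp [circleExp, integral_exp_mul_complex hc, hperiod]

theorem summable_norm_mul_circleExp {ι : Type*} {a : ι → ℂ} (ha : Summable (‖a ·‖)) (φ : ι → ℤ)
    (x : ℝ) : Summable fun i => ‖a i * circleExp (φ i) x‖ := by
  simpa [norm_circleExp] using ha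

theorem integral_tsum_mul_conj_tsum {ι κ : Type*} [Countable ι] [Countable κ] {a : ι → ℂ}
    {b : κ → ℂ} (ha : Summable (‖a ·‖)) (hb : Summable (‖b ·‖)) (φ : ι → ℤ) (ψ : κ → ℤ) :
    ∫ x in (0 : ℝ)..1, (∑' i, a i * circleExp (φ i) x) * conj (∑' j, b j * circleExp (ψ j) x)
      = ∑' p : ι × κ, if φ p.1 = ψ p.2 then a p.1 * conj (b p.2) else 0 := by
  have hexpand : ∀ x, (∑' i, a i * circleExp (φ i) x) * conj (∑' j, b j * circleExp (ψ j) x)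
      = ∑' p : ι × κ, a p.1 * conj (b p.2) * circleExp (φ p.1 - ψ p.2) x := by
    intro x
    rw [conj_tsum, tsum_mul_tsum_of_summable_norm (summable_norm_mul_circleExp ha φ x)
      (by simpa using summable_norm_mul_circleExp hb ψ x)]
    congr with p
    rw [map_mul, ← circleExp_mul_conj]
    ring
  have hsum : Summable fun p : ι × κ => ‖a p.1 * conj (b p.2)‖ := by
    simpa using summable_mul_of_summable_norm (f := (‖a ·‖)) (g := (‖b ·‖)) (by simpa using ha)
      (by simpa using hb)
  simp_rw [hexpand, intervalIntegral.integral_of_le zero_le_one]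
  rw [← integral_tsum_of_summable_integral_norm
    (fun p => ((continuous_circleExp _).const_mul _).integrableOn_Ioc)
    (by simpa [norm_circleExp] using hsum)]
  congr with p
  rw [integral_const_mul, ← intervalIntegral.integral_of_le zero_le_one, integral_circleExp]
  simp [sub_eq_zero]

theorem SchwartzMap.exists_summable_bound_comp_add_int {E : Type*} [NormedAddCommGroup E]
    [NormedSpace ℝ E] (g : SchwartzMap ℝ E) {K : Set ℝ} (hK : IsCompact K) :
    ∃ u : ℤ → ℝ, Summable u ∧ ∀ k : ℤ, ∀ x ∈ K, ‖g (x + k)‖ ≤ u k := by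
  have : CompactSpace K := isCompact_iff_compactSpace.mp hK
  let G : C(ℝ, E) := ⟨g, g.continuous⟩
  refine ⟨fun k => ‖(G.comp (ContinuousMap.addRight (k : ℝ))).restrict K‖, ?_, fun k x hx => ?_⟩
  · exact summable_of_isBigO (summable_abs_int_rpow one_lt_two)
      ((isBigO_norm_restrict_cocompact G zero_lt_two (g.isBigO_cocompact_rpow (-2)) ⟨K, hK⟩
        ).comp_tendsto Int.tendsto_coe_cofinite)
  · exact ((G.comp (ContinuousMap.addRight (k : ℝ))).restrict K).norm_coe_le_norm ⟨x, hx⟩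

theorem SchwartzMap.summable_norm_comp_add_int {E : Type*} [NormedAddCommGroup E]
    [NormedSpace ℝ E] (g : SchwartzMap ℝ E) (x : ℝ) : Summable fun k : ℤ => ‖g (x + k)‖ := by
  obtain ⟨u, hu, hgu⟩ := g.exists_summable_bound_comp_add_int isCompact_singleton
  exact hu.of_nonneg_of_le (fun _ => norm_nonneg _) (fun k => hgu k x rfl)

theorem SchwartzMap.integrable_mul_conj {D : Type*} [NormedAddCommGroup D] [NormedSpace ℝ D]
    [MeasurableSpace D] [BorelSpace D] [SecondCountableTopology D] {μ : Measure D}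
    [μ.HasTemperateGrowth] (g h : SchwartzMap D ℂ) : Integrable (fun t => g t * conj (h t)) μ :=
  (h.integrable.mono (continuous_conj.comp h.continuous).aestronglyMeasurable
    (ae_of_all _ fun _ => by simp)).bdd_mul g.continuous.aestronglyMeasurable
    (ae_of_all _ g.toBoundedContinuousFunction.norm_coe_le_norm)

theorem MeasureTheory.Integrable.intervalIntegral_tsum_comp_add_int {E : Type*}
    [NormedAddCommGroup E] [NormedSpace ℝ E] {f : ℝ → E} (hf : Integrable f) :
    ∫ x in (0 : ℝ)..1, ∑' k : ℤ, f (x + k) = ∫ x, f x := by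
  rw [← hf.hasSum_intervalIntegral_comp_add_int.tsum_eq,
    intervalIntegral.integral_of_le zero_le_one, ← integral_tsum_of_summable_integral_norm]
  · simp_rw [intervalIntegral.integral_of_le zero_le_one]
  · exact fun k => (hf.comp_add_right k).integrableOn
  · simpa [intervalIntegral.integral_of_le zero_le_one] using
      hf.norm.hasSum_intervalIntegral_comp_add_int.summable

theorem setIntegral_Icc_prod_eq_intervalIntegral {E : Type*} [NormedAddCommGroup E]
    [NormedSpace ℝ E] {f : ℝ × ℝ → E} {a b : ℝ × ℝ} (hab : a ≤ b)
    (hf : IntegrableOn f (Set.Icc a b)) :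
    ∫ z in Set.Icc a b, f z = ∫ y in a.2..b.2, ∫ x in a.1..b.1, f (x, y) := by
  rw [Set.Icc_prod_eq, Measure.volume_eq_prod] at *
  simp only [setIntegral_prod _ hf, intervalIntegral.integral_of_le hab.1,
    intervalIntegral.integral_of_le hab.2, ← integral_Icc_eq_integral_Ioc]
  exact integral_integral_swap (by rwa [Measure.prod_restrict])

theorem Int.mul_add_eq_mul_add_iff {n k k' m m' : ℤ} (hm : 0 ≤ m) (hmn : m < |n|) (hm' : 0 ≤ m')
    (hmn' : m' < |n|) : n * k + m = n * k' + m' ↔ k = k' ∧ m = m' := by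
  refine ⟨fun h => ?_, fun ⟨hk, hmm'⟩ => hk ▸ hmm' ▸ rfl⟩
  have hmm' : m' - m = 0 := Int.eq_zero_of_abs_lt_dvd ((abs_dvd n _).mpr ⟨k - k', by linarith⟩)
    (abs_sub_lt_iff.mpr ⟨by linarith, by linarith⟩)
  have hn : n ≠ 0 := by
    rintro rfl
    simp at hmn
    omega
  exact ⟨mul_left_cancel₀ hn (by linarith), by linarith⟩

theorem tsum_ite_fst_eq_snd {α M : Type*} [DecidableEq α] [AddCommMonoid M] [TopologicalSpace M]
    (f : α → α → M) : ∑' p : α × α, (if p.1 = p.2 then f p.1 p.2 else 0) = ∑' a, f a a := by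
  rw [← Function.Injective.tsum_eq (g := fun a : α => (a, a))
    fun a b hab => congrArg Prod.fst hab]
  · simp
  · rintro ⟨a, b⟩ hab
    obtain rfl : a = b := by
      by_contra hne
      simp [hne] at hab
    exact ⟨a, rfl⟩

theorem Theta_eq_tsum (n m : ℤ) (g : SchwartzMap ℝ ℂ) (x1 x2 : ℝ) :
    Theta n m g x1 x2 = ∑' k : ℤ, g (x2 + k) * circleExp (n * k + m) x1 := by
  unfold Theta circleExp
  congr with k
  push_cast
  ring_nf

theorem continuousOn_Theta (n m : ℤ) (g : SchwartzMap ℝ ℂ) {K : Set ℝ} (hK : IsCompact K) :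
    ContinuousOn (fun p : ℝ × ℝ => Theta n m g p.1 p.2) (Set.univ ×ˢ K) := by
  obtain ⟨u, hu, hgu⟩ := g.exists_summable_bound_comp_add_int hK
  simp_rw [Theta_eq_tsum]
  refine continuousOn_tsum (fun k => Continuous.continuousOn ?_) hu fun k p hp => ?_
  · have := continuous_circleExp (n * k + m)
    fun_prop
  · rw [norm_mul, norm_circleExp, mul_one]
    exact hgu k p.2 hp.2

theorem intervalIntegral_Theta_mul_conj_Theta {n m m' : ℤ} (hm : 0 ≤ m) (hmn : m < |n|)
    (hm' : 0 ≤ m') (hmn' : m' < |n|) (g h : SchwartzMap ℝ ℂ) (x2 : ℝ) :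
    ∫ x1 in (0 : ℝ)..1, Theta n m g x1 x2 * conj (Theta n m' h x1 x2)
      = if m = m' then ∑' k : ℤ, g (x2 + k) * conj (h (x2 + k)) else 0 := by
  simp_rw [Theta_eq_tsum]
  rw [integral_tsum_mul_conj_tsum (g.summable_norm_comp_add_int x2)
    (h.summable_norm_comp_add_int x2)]
  simp_rw [Int.mul_add_eq_mul_add_iff hm hmn hm' hmn']
  split_ifs with hmm'
  · simp only [hmm', and_true]
    exact tsum_ite_fst_eq_snd fun k k' : ℤ => g (x2 + k) * conj (h (x2 + k'))
  · simp [hmm']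

theorem integral_Theta_mul_conj_Theta {n m m' : ℤ} (hm : 0 ≤ m) (hmn : m < |n|) (hm' : 0 ≤ m')
    (hmn' : m' < |n|) (g h : SchwartzMap ℝ ℂ) :
    ∫ x in Set.Icc ((0 : ℝ), (0 : ℝ)) (1, 1), Theta n m g x.1 x.2 * conj (Theta n m' h x.1 x.2)
      = (if m = m' then 1 else 0) * ∫ t : ℝ, g t * conj (h t) := by
  have hcont : ContinuousOn (fun x : ℝ × ℝ => Theta n m g x.1 x.2 * conj (Theta n m' h x.1 x.2))
      (Set.univ ×ˢ Set.Icc 0 1) :=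
    (continuousOn_Theta n m g isCompact_Icc).mul
      (continuous_conj.comp_continuousOn (continuousOn_Theta n m' h isCompact_Icc))
  have hsquare : Set.Icc ((0 : ℝ), (0 : ℝ)) (1, 1) ⊆ Set.univ ×ˢ Set.Icc 0 1 :=
    fun x hx => ⟨trivial, hx.1.2, hx.2.2⟩
  rw [setIntegral_Icc_prod_eq_intervalIntegral (by simp)
    ((hcont.mono hsquare).integrableOn_compact isCompact_Icc)]
  simp_rw [intervalIntegral_Theta_mul_conj_Theta hm hmn hm' hmn']
  split_ifs
  · simpa using (g.integrable_mul_conj h).intervalIntegral_tsum_comp_add_int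
  · simp

theorem injective_of_forall_inner_eq {𝕜 α β E : Type*} [RCLike 𝕜] [NormedAddCommGroup E]
    [InnerProductSpace 𝕜 E] {Φ : α → β} (B : β → β → 𝕜) {ι : α → E} (hι : ι.Injective)
    (hB : ∀ a b, B (Φ a) (Φ b) = inner 𝕜 (ι b) (ι a)) : Φ.Injective := by
  intro a b hab
  apply hι
  rw [← sub_eq_zero, ← inner_self_eq_zero (𝕜 := 𝕜), inner_sub_left, inner_sub_right,
    inner_sub_right, ← hB, ← hB, ← hB, ← hB, hab]
  ring

theorem theta_orthogonality_general (n : ℤ) (m m' : ℤ)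
    (hm0 : 0 ≤ m) (hm1 : m ≤ |n| - 1) (hm0' : 0 ≤ m') (hm1' : m' ≤ |n| - 1)
    (g h : SchwartzMap ℝ ℂ) :
    (∫ x in Set.Icc ((0 : ℝ), (0 : ℝ)) (1, 1),
        Theta n m g x.1 x.2 * (starRingEnd ℂ) (Theta n m' h x.1 x.2))
      = (if m = m' then 1 else 0) * ∫ t : ℝ, g t * (starRingEnd ℂ) (h t) ∧
    Function.Injective (fun g₀ : SchwartzMap ℝ ℂ => Theta n m g₀) := by
  have hmn : m < |n| := by omega
  refine ⟨integral_Theta_mul_conj_Theta hm0 hmn hm0' (by omega) g h, ?_⟩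
  refine injective_of_forall_inner_eq (fun F G => ∫ x in Set.Icc ((0 : ℝ), (0 : ℝ)) (1, 1),
    F x.1 x.2 * conj (G x.1 x.2)) (SchwartzMap.injective_toLp 2) fun g₀ h₀ => ?_
  simp only [integral_Theta_mul_conj_Theta hm0 hmn hm0 hmn, SchwartzMap.inner_toL2_toL2_eq,
    ↓reduceIte, one_mul, RCLike.inner_apply]

/-- Orthogonality: for `0 ≤ m, m' ≤ |n|−1`,
`∫_{[0,1]²} Θ_m(g) conj(Θ_{m'}(h)) = δ_{m,m'} ∫_ℝ g conj(h)`; in particular each `Θ_m`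
preserves the `L²` inner product and is injective on Schwartz functions. -/
theorem theta_orthogonality (n : ℤ) (hn : n ≠ 0) (m m' : ℤ)
    (hm0 : 0 ≤ m) (hm1 : m ≤ |n| - 1) (hm0' : 0 ≤ m') (hm1' : m' ≤ |n| - 1)
    (g h : SchwartzMap ℝ ℂ) :
    (∫ x in Set.Icc ((0 : ℝ), (0 : ℝ)) (1, 1),
        Theta n m g x.1 x.2 * (starRingEnd ℂ) (Theta n m' h x.1 x.2))
      = (if m = m' then 1 else 0) * ∫ t : ℝ, g t * (starRingEnd ℂ) (h t) ∧
    Function.Injective (fun g₀ : SchwartzMap ℝ ℂ => Theta n m g₀) :=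
  theta_orthogonality_general n m m' hm0 hm1 hm0' hm1' g h
end

section
/- Let a(z), b(z) be logarithmic fields on W such that a is local with b and a is local with itself. Then the three logarithmic fields D_z a(z), b(z) and D_ℓ a(z) are pairwise local. -/
variable {W : Type*} [AddCommGroup W] [Module ℂ W]

variable (W) in
/-- The data of a logarithmic field `a(z) = Σ_μ Σ_j a_{μ,j} z^{−μ} ℓ^j` on `W`, recorded
pointwise: the value at `(μ, j, w)` is the coefficient of `z^{−μ} ℓ^j` applied to `w`
(here `ℓ` plays the role of `log z`). -/
abbrev LogFieldData : Type _ := ℂ → ℕ → W → W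

/-- `a` is a logarithmic field: its coefficients are linear, it is polynomial in `ℓ`, its
`z`-exponents lie in finitely many cosets of `ℤ` in `ℂ`, and for each vector `w` and each
coset the coefficients `a_{α+k,·}` annihilate `w` for all sufficiently large `k`. -/
def IsLogField (a : LogFieldData W) : Prop :=
  (∀ (μ : ℂ) (j : ℕ), IsLinearMap ℂ (a μ j)) ∧
  (∀ μ : ℂ, ∃ J : ℕ, ∀ j : ℕ, J ≤ j → a μ j = 0) ∧
  (∃ A : Finset ℂ, ∀ μ : ℂ, a μ ≠ 0 → ∃ α ∈ A, ∃ k : ℤ, μ = α + (k : ℂ)) ∧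
  (∀ (w : W) (α : ℂ), ∃ N : ℤ, ∀ k : ℤ, N ≤ k → ∀ j : ℕ, a (α + (k : ℂ)) j w = 0)

/-- `(z₁−z₂)^N [a(z₁), b(z₂)] = 0`, written coefficientwise (coefficient of
`z₁^{−μ₁} ℓ₁^{j₁} z₂^{−μ₂} ℓ₂^{j₂}`), pointwise on `W`. -/
def IsLocalOrd (a b : LogFieldData W) (N : ℕ) : Prop :=
  ∀ (μ₁ : ℂ) (j₁ : ℕ) (μ₂ : ℂ) (j₂ : ℕ) (w : W),
    ∑ i ∈ Finset.range (N + 1), ((-1 : ℤ) ^ i * (N.choose i : ℤ)) •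
      (a (μ₁ + ((N : ℂ) - (i : ℂ))) j₁ (b (μ₂ + (i : ℂ)) j₂ w)
        - b (μ₂ + (i : ℂ)) j₂ (a (μ₁ + ((N : ℂ) - (i : ℂ))) j₁ w)) = 0

/-- Two logarithmic fields are local if `(z₁−z₂)^N [a(z₁), b(z₂)] = 0` for some `N`. -/
def IsLocal (a b : LogFieldData W) : Prop := ∃ N : ℕ, IsLocalOrd a b N

/-- The derivation `D_z = ∂_z + z^{−1} ∂_ℓ`, coefficientwise. -/
noncomputable def Dz (a : LogFieldData W) : LogFieldData W := fun μ j w =>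
  ((j : ℂ) + 1) • a (μ - 1) (j + 1) w - (μ - 1) • a (μ - 1) j w

/-- The derivation `D_ℓ = z ∂_z + ∂_ℓ`, coefficientwise. -/
noncomputable def Dl (a : LogFieldData W) : LogFieldData W := fun μ j w =>
  ((j : ℂ) + 1) • a μ (j + 1) w - μ • a μ j w

/-- The derivation `∂_ℓ`, coefficientwise. -/
noncomputable def Del (a : LogFieldData W) : LogFieldData W := fun μ j w =>
  ((j : ℂ) + 1) • a μ (j + 1) w

/-! Write the coefficients of `[a(z₁), b(z₂)] w` as a two-variable series `C`; locality of
order `N` says `(z₁ - z₂)^N C = 0`. Since `D_ℓ` acts on coefficients as a derivation,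
`[D_ℓ a(z₁), b(z₂)] w = D_{ℓ,1} C`, and `[z₁ - z₂, D_{ℓ,1}] = -z₁` commutes with `z₁ - z₂`, so
`(z₁ - z₂)^{N+1} D_{ℓ,1} C = D_{ℓ,1} (z₁ - z₂)^{N+1} C - (N + 1) z₁ (z₁ - z₂)^N C = 0`.
The same works for `D_ℓ` acting on the second field, locality is symmetric, and
`D_z a = z⁻¹ D_ℓ a` only shifts exponents, which does not affect locality. -/

theorem pow_succ_mul_eq_of_commutator_eq {R : Type*} [Ring R] {p d z : R}
    (hpd : p * d - d * p = z) (hpz : Commute p z) (n : ℕ) :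
    p ^ (n + 1) * d = d * p ^ (n + 1) + ((n + 1 : ℕ) : R) * (z * p ^ n) := by
  induction n with
  | zero => simp [← hpd]
  | succ n ih =>
    have hpd' : p * d = z + d * p := sub_eq_iff_eq_add.mp hpd
    rw [pow_succ', mul_assoc, ih, mul_add, ← mul_assoc, hpd', add_mul, mul_assoc,
      (Nat.cast_commute (n + 1) p).symm.left_comm, hpz.left_comm, ← pow_succ', ← pow_succ' p n]
    push_cast
    noncomm_ring

theorem Module.End.pow_succ_apply_eq_zero_of_commutator_eq {R M : Type*} [Semiring R]
    [AddCommGroup M] [Module R M] {p d z : Module.End R M} (hpd : p * d - d * p = z)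
    (hpz : Commute p z) {n : ℕ} {c : M} (hc : (p ^ n) c = 0) : (p ^ (n + 1)) (d c) = 0 := by
  have key := congrArg (· c) (pow_succ_mul_eq_of_commutator_eq hpd hpz n)
  simp only [Module.End.mul_apply, LinearMap.add_apply] at key
  rw [key, pow_succ', Module.End.mul_apply, hc]
  simp

variable (W) in
/-- Coefficients `C μ₁ j₁ μ₂ j₂` of `z₁^{−μ₁} ℓ₁^{j₁} z₂^{−μ₂} ℓ₂^{j₂}` in a two-variable
logarithmic series with values in `W`. -/
abbrev LogFieldData₂ : Type _ := ℂ → ℕ → ℂ → ℕ → W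

namespace LogFieldData₂

/-- Multiplication by `z₁`. -/
def mulZ₁ : Module.End ℂ (LogFieldData₂ W) where
  toFun C μ₁ j₁ μ₂ j₂ := C (μ₁ + 1) j₁ μ₂ j₂
  map_add' _ _ := rfl
  map_smul' _ _ := rfl

def mulZ₂ : Module.End ℂ (LogFieldData₂ W) where
  toFun C μ₁ j₁ μ₂ j₂ := C μ₁ j₁ (μ₂ + 1) j₂
  map_add' _ _ := rfl
  map_smul' _ _ := rfl

def mulZ₁SubZ₂ : Module.End ℂ (LogFieldData₂ W) := mulZ₁ - mulZ₂

def swap : Module.End ℂ (LogFieldData₂ W) where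
  toFun C μ₁ j₁ μ₂ j₂ := C μ₂ j₂ μ₁ j₁
  map_add' _ _ := rfl
  map_smul' _ _ := rfl

def dl₁ : Module.End ℂ (LogFieldData₂ W) where
  toFun C μ₁ j₁ μ₂ j₂ := ((j₁ : ℂ) + 1) • C μ₁ (j₁ + 1) μ₂ j₂ - μ₁ • C μ₁ j₁ μ₂ j₂
  map_add' C D := by ext; simp only [Pi.add_apply, smul_add]; abel
  map_smul' c C := by ext; simp only [Pi.smul_apply, RingHom.id_apply, smul_sub, smul_comm c]

def dl₂ : Module.End ℂ (LogFieldData₂ W) where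
  toFun C μ₁ j₁ μ₂ j₂ := ((j₂ : ℂ) + 1) • C μ₁ j₁ μ₂ (j₂ + 1) - μ₂ • C μ₁ j₁ μ₂ j₂
  map_add' C D := by ext; simp only [Pi.add_apply, smul_add]; abel
  map_smul' c C := by ext; simp only [Pi.smul_apply, RingHom.id_apply, smul_sub, smul_comm c]

theorem commute_mulZ₁_mulZ₂ : Commute (mulZ₁ : Module.End ℂ (LogFieldData₂ W)) mulZ₂ := rfl

theorem commute_mulZ₁SubZ₂_mulZ₁ : Commute mulZ₁SubZ₂ (mulZ₁ : Module.End ℂ (LogFieldData₂ W)) :=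
  (Commute.refl _).sub_left commute_mulZ₁_mulZ₂.symm

theorem commute_mulZ₁SubZ₂_mulZ₂ : Commute mulZ₁SubZ₂ (mulZ₂ : Module.End ℂ (LogFieldData₂ W)) :=
  commute_mulZ₁_mulZ₂.sub_left (Commute.refl _)

theorem mulZ₁SubZ₂_mul_dl₁_sub :
    mulZ₁SubZ₂ * dl₁ - dl₁ * mulZ₁SubZ₂ = -(mulZ₁ : Module.End ℂ (LogFieldData₂ W)) := by
  ext C μ₁ j₁ μ₂ j₂
  simp [mulZ₁SubZ₂, mulZ₁, mulZ₂, dl₁]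
  module

theorem mulZ₁SubZ₂_mul_dl₂_sub :
    mulZ₁SubZ₂ * dl₂ - dl₂ * mulZ₁SubZ₂ = (mulZ₂ : Module.End ℂ (LogFieldData₂ W)) := by
  ext C μ₁ j₁ μ₂ j₂
  simp [mulZ₁SubZ₂, mulZ₁, mulZ₂, dl₂]
  module

theorem swap_mul_mulZ₁SubZ₂ :
    swap * mulZ₁SubZ₂ = -mulZ₁SubZ₂ * (swap : Module.End ℂ (LogFieldData₂ W)) := by
  ext C μ₁ j₁ μ₂ j₂
  simp [mulZ₁SubZ₂, mulZ₁, mulZ₂, swap]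

theorem mulZ₁_pow_apply (k : ℕ) (C : LogFieldData₂ W) (μ₁ : ℂ) (j₁ : ℕ) (μ₂ : ℂ) (j₂ : ℕ) :
    (mulZ₁ ^ k) C μ₁ j₁ μ₂ j₂ = C (μ₁ + k) j₁ μ₂ j₂ := by
  induction k generalizing μ₁ with
  | zero => simp
  | succ k ih =>
    rw [pow_succ', Module.End.mul_apply]
    change (mulZ₁ ^ k) C (μ₁ + 1) j₁ μ₂ j₂ = _
    rw [ih]
    push_cast
    congr 1
    ring

theorem mulZ₂_pow_apply (k : ℕ) (C : LogFieldData₂ W) (μ₁ : ℂ) (j₁ : ℕ) (μ₂ : ℂ) (j₂ : ℕ) :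
    (mulZ₂ ^ k) C μ₁ j₁ μ₂ j₂ = C μ₁ j₁ (μ₂ + k) j₂ := by
  induction k generalizing μ₂ with
  | zero => simp
  | succ k ih =>
    rw [pow_succ', Module.End.mul_apply]
    change (mulZ₂ ^ k) C μ₁ j₁ (μ₂ + 1) j₂ = _
    rw [ih]
    push_cast
    congr 1
    ring

theorem mulZ₁SubZ₂_pow_apply (N : ℕ) (C : LogFieldData₂ W) (μ₁ : ℂ) (j₁ : ℕ) (μ₂ : ℂ)
    (j₂ : ℕ) :
    (mulZ₁SubZ₂ ^ N) C μ₁ j₁ μ₂ j₂ = ∑ i ∈ Finset.range (N + 1),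
      ((-1 : ℤ) ^ i * (N.choose i : ℤ)) • C (μ₁ + ((N : ℂ) - (i : ℂ))) j₁ (μ₂ + (i : ℂ)) j₂ := by
  rw [mulZ₁SubZ₂, sub_eq_neg_add, ((commute_mulZ₁_mulZ₂ (W := W)).symm.neg_left).add_pow,
    LinearMap.sum_apply, Finset.sum_apply, Finset.sum_apply, Finset.sum_apply, Finset.sum_apply]
  refine Finset.sum_congr rfl fun i hi => ?_
  rw [neg_pow, Module.End.mul_apply, Module.End.mul_apply, Module.End.mul_apply,
    Module.End.natCast_apply, ← Int.cast_one, ← Int.cast_neg, ← Int.cast_pow,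
    Module.End.intCast_apply]
  simp only [Pi.smul_apply, mulZ₂_pow_apply, mulZ₁_pow_apply, mul_smul, natCast_zsmul,
    Nat.cast_sub (Finset.mem_range_succ_iff.mp hi)]

def bracket (a b : LogFieldData W) (w : W) : LogFieldData₂ W :=
  fun μ₁ j₁ μ₂ j₂ => a μ₁ j₁ (b μ₂ j₂ w) - b μ₂ j₂ (a μ₁ j₁ w)

theorem bracket_Dl_left {a b : LogFieldData W} (hb : ∀ μ j, IsLinearMap ℂ (b μ j)) (w : W) :
    bracket (Dl a) b w = dl₁ (bracket a b w) := by
  ext μ₁ j₁ μ₂ j₂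
  simp only [bracket, Dl, dl₁, LinearMap.coe_mk, AddHom.coe_mk, (hb μ₂ j₂).map_sub,
    (hb μ₂ j₂).map_smul, smul_sub]
  abel

theorem bracket_Dl_right {a b : LogFieldData W} (ha : ∀ μ j, IsLinearMap ℂ (a μ j)) (w : W) :
    bracket a (Dl b) w = dl₂ (bracket a b w) := by
  ext μ₁ j₁ μ₂ j₂
  simp only [bracket, Dl, dl₂, LinearMap.coe_mk, AddHom.coe_mk, (ha μ₁ j₁).map_sub,
    (ha μ₁ j₁).map_smul, smul_sub]
  abel

theorem bracket_comm (a b : LogFieldData W) (w : W) :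
    bracket b a w = -swap (bracket a b w) := by
  ext μ₁ j₁ μ₂ j₂
  simp [bracket, swap]

end LogFieldData₂

open LogFieldData₂

theorem isLinearMap_Dl {a : LogFieldData W} (ha : ∀ μ j, IsLinearMap ℂ (a μ j)) (μ : ℂ)
    (j : ℕ) : IsLinearMap ℂ (Dl a μ j) where
  map_add x y := by simp only [Dl, (ha μ (j + 1)).map_add, (ha μ j).map_add, smul_add]; abel
  map_smul c x := by simp only [Dl, (ha μ (j + 1)).map_smul, (ha μ j).map_smul]; module

theorem isLocalOrd_iff {a b : LogFieldData W} {N : ℕ} :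
    IsLocalOrd a b N ↔ ∀ w, (mulZ₁SubZ₂ ^ N) (bracket a b w) = 0 := by
  simp only [IsLocalOrd, funext_iff, Pi.zero_apply, mulZ₁SubZ₂_pow_apply, bracket]
  exact ⟨fun h w μ₁ j₁ μ₂ j₂ => h μ₁ j₁ μ₂ j₂ w, fun h μ₁ j₁ μ₂ j₂ w => h w μ₁ j₁ μ₂ j₂⟩

namespace IsLocalOrd

variable {a b : LogFieldData W} {N : ℕ}

theorem Dl_left (h : IsLocalOrd a b N) (hb : ∀ μ j, IsLinearMap ℂ (b μ j)) :
    IsLocalOrd (Dl a) b (N + 1) := by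
  rw [isLocalOrd_iff] at h ⊢
  intro w
  rw [bracket_Dl_left hb]
  exact Module.End.pow_succ_apply_eq_zero_of_commutator_eq mulZ₁SubZ₂_mul_dl₁_sub
    (commute_mulZ₁SubZ₂_mulZ₁ (W := W)).neg_right (h w)

theorem Dl_right (h : IsLocalOrd a b N) (ha : ∀ μ j, IsLinearMap ℂ (a μ j)) :
    IsLocalOrd a (Dl b) (N + 1) := by
  rw [isLocalOrd_iff] at h ⊢
  intro w
  rw [bracket_Dl_right ha]
  exact Module.End.pow_succ_apply_eq_zero_of_commutator_eq mulZ₁SubZ₂_mul_dl₂_sub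
    commute_mulZ₁SubZ₂_mulZ₂ (h w)

theorem symm (h : IsLocalOrd a b N) : IsLocalOrd b a N := by
  rw [isLocalOrd_iff] at h ⊢
  intro w
  have hswap : ((-mulZ₁SubZ₂) ^ N) (swap (bracket a b w)) = 0 := by
    rw [← Module.End.mul_apply, ← (SemiconjBy.pow_right (swap_mul_mulZ₁SubZ₂ (W := W)) N).eq, Module.End.mul_apply,
      h, map_zero]
  rw [neg_pow (mulZ₁SubZ₂ : Module.End ℂ (LogFieldData₂ W))] at hswap
  rw [bracket_comm, map_neg, neg_eq_zero]
  rcases neg_one_pow_eq_or (Module.End ℂ (LogFieldData₂ W)) N with hN | hN <;>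
    simpa [hN] using hswap

theorem Dz_left (h : IsLocalOrd (Dl a) b N) : IsLocalOrd (Dz a) b N := by
  intro μ₁ j₁ μ₂ j₂ w
  convert h (μ₁ - 1) j₁ μ₂ j₂ w using 6 <;> rw [sub_add_eq_add_sub] <;> rfl

end IsLocalOrd

/-- If `a`, `b` are logarithmic fields with `a` local to `b` and to itself, then
`D_z a`, `b` and `D_ℓ a` are pairwise local. -/
theorem Dz_Dl_local (a b : LogFieldData W)
    (ha : IsLogField a) (hb : IsLogField b) (hab : IsLocal a b) (haa : IsLocal a a) :
    IsLocal (Dz a) b ∧ IsLocal (Dz a) (Dl a) ∧ IsLocal b (Dl a) := by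
  obtain ⟨N, hN⟩ := hab
  obtain ⟨M, hM⟩ := haa
  have hDl_b : IsLocalOrd (Dl a) b (N + 1) := hN.Dl_left hb.1
  have hDl_Dl : IsLocalOrd (Dl a) (Dl a) (M + 2) :=
    (hM.Dl_left ha.1).Dl_right (isLinearMap_Dl ha.1)
  exact ⟨⟨N + 1, hDl_b.Dz_left⟩, ⟨M + 2, hDl_Dl.Dz_left⟩, ⟨N + 1, hDl_b.symm⟩⟩
end
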